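/- Let (p_n) be a sequence of positive integers, and for each n let Σ_n and Σ̃_n be real symmetric p_n×p_n matrices such that sup_n ‖Σ_n‖ < ∞, sup_n ‖Σ̃_n‖ < ∞ and ‖Σ_n − Σ̃_n‖ → 0 as n → ∞. Assume the empirical spectral distributions μ_{Σ̃_n} converge weakly to a probability measure ν^∞ whose cumulative distribution function F_{ν^∞} is β-Hölder continuous for some β ∈ (0,1]. Then there exist C > 0 and N ∈ ℕ such that for all n ≥ N, all y ∈ (0,1) and all A > 0: D(μ_{Σ̃_n}, μ_{Σ_n}) ≤ C·(A·‖Σ_n − Σ̃_n‖/y² + 1/(y²·A) + y^β + D(μ_{Σ̃_n}, ν^∞)). -/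

import Mathlib

/-!
Weyl's inequality says that a perturbation of spectral norm `d = ‖Σ - Σ̃‖` moves each eigenvalue
by at most `d`; by a dimension count (Courant–Fischer) this interlaces the eigenvalue counting
functions, `F_{μ_Σ̃}(t - d) ≤ F_{μ_Σ}(t) ≤ F_{μ_Σ̃}(t + d)`. Replacing `F_{μ_Σ̃}` by `F_ν` at cost
`D(μ_Σ̃, ν)` on each side and using the Hölder continuity of `F_ν` gives
`D(μ_Σ̃, μ_Σ) ≤ 2 D(μ_Σ̃, ν) + H d^β`. If `d ≤ y` then `d^β ≤ y^β`; otherwise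
`A d / y² + 1 / (y² A) ≥ 1 ≥ D(μ_Σ̃, μ_Σ)`. Hence the bound holds for every `n`, with `C = 2 + H`.
-/

open MeasureTheory ProbabilityTheory Filter
open scoped NNReal

/-- Spectral (operator) norm of a real matrix. -/
noncomputable def specNorm {m p : Type*} [Fintype m] [Fintype p] [DecidableEq p]
    (M : Matrix m p ℝ) : ℝ :=
  ‖(Matrix.toEuclideanLin M).toContinuousLinearMap‖

/-- Empirical spectral distribution `μ_M = (1/p)·∑_{i} δ_{λ_i}` of a Hermitian
real matrix, as a measure on `ℝ`. -/
noncomputable def esd {p : ℕ} (M : Matrix (Fin p) (Fin p) ℝ) (hM : M.IsHermitian) :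
    Measure ℝ :=
  ((p : ℝ≥0))⁻¹ • ∑ i, Measure.dirac (hM.eigenvalues i)

/-- Cumulative distribution function of a measure on `ℝ`. -/
noncomputable def cdf' (μ : Measure ℝ) (t : ℝ) : ℝ := (μ (Set.Iic t)).toReal

/-- Kolmogorov distance between two measures on `ℝ`. -/
noncomputable def kolDist (μ ν : Measure ℝ) : ℝ := ⨆ t : ℝ, |cdf' μ t - cdf' ν t|

open Finset
open scoped RealInnerProductSpace

section SpectralNorm

variable {n : Type*} [Fintype n] [DecidableEq n]

lemma specNorm_nonneg {m : Type*} [Fintype m] (M : Matrix m n ℝ) : 0 ≤ specNorm M :=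
  norm_nonneg _

lemma specNorm_sub_comm (A B : Matrix n n ℝ) : specNorm (A - B) = specNorm (B - A) := by
  rw [specNorm, specNorm, ← neg_sub B A, map_neg, map_neg, norm_neg]

lemma real_inner_toEuclideanLin_self_le (M : Matrix n n ℝ) (x : EuclideanSpace ℝ n) :
    ⟪Matrix.toEuclideanLin M x, x⟫ ≤ specNorm M * ‖x‖ ^ 2 :=
  calc ⟪Matrix.toEuclideanLin M x, x⟫ ≤ ‖Matrix.toEuclideanLin M x‖ * ‖x‖ :=
        real_inner_le_norm _ _
    _ ≤ specNorm M * ‖x‖ * ‖x‖ := by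
        gcongr; exact (Matrix.toEuclideanLin M).toContinuousLinearMap.le_opNorm x
    _ = specNorm M * ‖x‖ ^ 2 := by ring

end SpectralNorm

namespace OrthonormalBasis

variable {ι 𝕜 E : Type*} [Fintype ι] [RCLike 𝕜] [NormedAddCommGroup E] [InnerProductSpace 𝕜 E]

lemma repr_eq_zero_of_mem_span_image (b : OrthonormalBasis ι 𝕜 E) {S : Set ι} {x : E}
    (hx : x ∈ Submodule.span 𝕜 (b '' S)) {i : ι} (hi : i ∉ S) : b.repr x i = 0 := by
  classical
  induction hx using Submodule.span_induction with
  | mem y hy =>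
    obtain ⟨j, hj, rfl⟩ := hy
    simp [show i ≠ j from fun h => hi (h ▸ hj)]
  | zero => simp
  | add u v _ _ hu hv => simp [hu, hv]
  | smul c u _ hu => simp [hu]

lemma finrank_span_image_finset (b : OrthonormalBasis ι 𝕜 E) (S : Finset ι) :
    Module.finrank 𝕜 (Submodule.span 𝕜 (b '' S)) = #S := by
  have hS : LinearIndependent 𝕜 (fun i : (S : Set ι) => b i) :=
    b.orthonormal.linearIndependent.comp _ Subtype.coe_injective
  rw [Set.image_eq_range, finrank_span_eq_card hS]
  simp

end OrthonormalBasis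

namespace Matrix.IsHermitian

variable {n : Type*} [Fintype n] [DecidableEq n] {A : Matrix n n ℝ}

noncomputable def eigenvalueCount (hA : A.IsHermitian) (t : ℝ) : ℕ :=
  #{i | hA.eigenvalues i ≤ t}

lemma repr_toEuclideanLin (hA : A.IsHermitian) (x : EuclideanSpace ℝ n) (i : n) :
    hA.eigenvectorBasis.repr (toEuclideanLin A x) i =
      hA.eigenvalues i * hA.eigenvectorBasis.repr x i := by
  have hAb : toEuclideanLin A (hA.eigenvectorBasis i) =
      hA.eigenvalues i • hA.eigenvectorBasis i := by
    ext j
    simpa [toLpLin_apply] using congrFun (hA.mulVec_eigenvectorBasis i) j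
  rw [OrthonormalBasis.repr_apply_apply, ← isSymmetric_toEuclideanLin_iff.mpr hA, hAb,
    real_inner_smul_left, ← OrthonormalBasis.repr_apply_apply]

lemma inner_toEuclideanLin_self_eq_sum (hA : A.IsHermitian) (x : EuclideanSpace ℝ n) :
    ⟪toEuclideanLin A x, x⟫ = ∑ i, hA.eigenvalues i * hA.eigenvectorBasis.repr x i ^ 2 := by
  rw [← hA.eigenvectorBasis.repr.inner_map_map, PiLp.inner_apply]
  refine sum_congr rfl fun i _ => ?_
  simp only [RCLike.inner_apply, conj_trivial, repr_toEuclideanLin]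
  ring

lemma norm_sq_eq_sum_repr_sq (hA : A.IsHermitian) (x : EuclideanSpace ℝ n) :
    ‖x‖ ^ 2 = ∑ i, hA.eigenvectorBasis.repr x i ^ 2 := by
  rw [← hA.eigenvectorBasis.repr.norm_map, EuclideanSpace.real_norm_sq_eq]

lemma inner_toEuclideanLin_self_le_of_mem_span (hA : A.IsHermitian) {S : Set n} {t : ℝ}
    (hS : ∀ i ∈ S, hA.eigenvalues i ≤ t) {x : EuclideanSpace ℝ n}
    (hx : x ∈ Submodule.span ℝ (hA.eigenvectorBasis '' S)) :
    ⟪toEuclideanLin A x, x⟫ ≤ t * ‖x‖ ^ 2 := by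
  rw [hA.inner_toEuclideanLin_self_eq_sum, hA.norm_sq_eq_sum_repr_sq, mul_sum]
  refine sum_le_sum fun i _ => ?_
  by_cases hi : i ∈ S
  · exact mul_le_mul_of_nonneg_right (hS i hi) (sq_nonneg _)
  · simp [hA.eigenvectorBasis.repr_eq_zero_of_mem_span_image hx hi]

lemma lt_inner_toEuclideanLin_self_of_mem_span (hA : A.IsHermitian) {S : Set n} {t : ℝ}
    (hS : ∀ i ∈ S, t < hA.eigenvalues i) {x : EuclideanSpace ℝ n}
    (hx : x ∈ Submodule.span ℝ (hA.eigenvectorBasis '' S)) (hx0 : x ≠ 0) :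
    t * ‖x‖ ^ 2 < ⟪toEuclideanLin A x, x⟫ := by
  rw [hA.inner_toEuclideanLin_self_eq_sum, hA.norm_sq_eq_sum_repr_sq, mul_sum]
  obtain ⟨i₀, hi₀⟩ : ∃ i, hA.eigenvectorBasis.repr x i ≠ 0 := by
    by_contra! h
    exact hx0 (hA.eigenvectorBasis.repr.map_eq_zero_iff.mp (PiLp.ext h))
  have hi₀S : i₀ ∈ S := by
    by_contra h
    exact hi₀ (hA.eigenvectorBasis.repr_eq_zero_of_mem_span_image hx h)
  refine sum_lt_sum (fun i _ => ?_) ⟨i₀, mem_univ i₀, ?_⟩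
  · by_cases hi : i ∈ S
    · exact mul_le_mul_of_nonneg_right (hS i hi).le (sq_nonneg _)
    · simp [hA.eigenvectorBasis.repr_eq_zero_of_mem_span_image hx hi]
  · exact mul_lt_mul_of_pos_right (hS i₀ hi₀S) (by positivity)

/-- Weyl's inequality, in counting form. -/
theorem eigenvalueCount_le_eigenvalueCount_add {B : Matrix n n ℝ} (hA : A.IsHermitian)
    (hB : B.IsHermitian) {d : ℝ} (hd : specNorm (A - B) ≤ d) (t : ℝ) :
    hA.eigenvalueCount t ≤ hB.eigenvalueCount (t + d) := by
  by_contra! hlt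
  set S : Finset n := {i | hA.eigenvalues i ≤ t}
  set T : Finset n := {i | hB.eigenvalues i ≤ t + d}
  set V := Submodule.span ℝ (hA.eigenvectorBasis '' S)
  set W := Submodule.span ℝ (hB.eigenvectorBasis '' ↑Tᶜ)
  -- `V` and `W` have dimensions summing to more than `card n`, so they meet nontrivially.
  have hVW : ¬ Disjoint V W := fun h => by
    have hdim := Submodule.finrank_add_finrank_le_of_disjoint h
    rw [hA.eigenvectorBasis.finrank_span_image_finset,
      hB.eigenvectorBasis.finrank_span_image_finset, finrank_euclideanSpace, card_compl] at hdim
    have : #S ≤ Fintype.card n := card_le_univ S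
    change #T < #S at hlt
    omega
  obtain ⟨x, hxV, hxW, hx0⟩ : ∃ x ∈ V, x ∈ W ∧ x ≠ 0 := by
    simpa [Submodule.disjoint_def] using hVW
  have hA_le : ⟪toEuclideanLin A x, x⟫ ≤ t * ‖x‖ ^ 2 :=
    hA.inner_toEuclideanLin_self_le_of_mem_span (fun i hi => (mem_filter.mp hi).2) hxV
  have hB_gt : (t + d) * ‖x‖ ^ 2 < ⟪toEuclideanLin B x, x⟫ :=
    hB.lt_inner_toEuclideanLin_self_of_mem_span
      (fun i hi => not_le.mp fun h => (mem_compl.mp hi) (mem_filter.mpr ⟨mem_univ i, h⟩)) hxW hx0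
  have hBA : ⟪toEuclideanLin B x, x⟫ - ⟪toEuclideanLin A x, x⟫ ≤ d * ‖x‖ ^ 2 := by
    have := real_inner_toEuclideanLin_self_le (B - A) x
    rw [map_sub, LinearMap.sub_apply, inner_sub_left, ← specNorm_sub_comm] at this
    exact this.trans (mul_le_mul_of_nonneg_right hd (sq_nonneg _))
  linarith

end Matrix.IsHermitian

lemma cdf'_nonneg (μ : Measure ℝ) (t : ℝ) : 0 ≤ cdf' μ t := ENNReal.toReal_nonneg

lemma cdf'_le_one (μ : Measure ℝ) [IsZeroOrProbabilityMeasure μ] (t : ℝ) : cdf' μ t ≤ 1 :=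
  measureReal_le_one

lemma abs_sub_cdf'_le_kolDist {μ ν : Measure ℝ} (hμ : ∀ t, cdf' μ t ≤ 1)
    (hν : ∀ t, cdf' ν t ≤ 1) (t : ℝ) : |cdf' μ t - cdf' ν t| ≤ kolDist μ ν := by
  refine le_ciSup (f := fun t => |cdf' μ t - cdf' ν t|) ⟨1, ?_⟩ t
  rintro _ ⟨s, rfl⟩
  exact abs_sub_le_of_nonneg_of_le (cdf'_nonneg μ s) (hμ s) (cdf'_nonneg ν s) (hν s)

lemma kolDist_nonneg (μ ν : Measure ℝ) : 0 ≤ kolDist μ ν :=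
  Real.iSup_nonneg fun _ => abs_nonneg _

lemma kolDist_le_one {μ ν : Measure ℝ} (hμ : ∀ t, cdf' μ t ≤ 1) (hν : ∀ t, cdf' ν t ≤ 1) :
    kolDist μ ν ≤ 1 :=
  ciSup_le fun t => abs_sub_le_of_nonneg_of_le (cdf'_nonneg μ t) (hμ t) (cdf'_nonneg ν t) (hν t)

lemma abs_sub_le_of_shift_le_of_le_shift {F G Φ : ℝ → ℝ} {d K L : ℝ}
    (hlow : ∀ t, G (t - d) ≤ F t) (hup : ∀ t, F t ≤ G (t + d))
    (hG : ∀ t, |G t - Φ t| ≤ K) (hΦ : ∀ t, |Φ (t + d) - Φ t| ≤ L) (t : ℝ) :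
    |G t - F t| ≤ 2 * K + L := by
  have hΦ' := hΦ (t - d)
  rw [sub_add_cancel] at hΦ'
  have h₁ := abs_le.mp (hG t)
  have h₂ := abs_le.mp (hG (t - d))
  have h₃ := abs_le.mp (hG (t + d))
  have h₄ := abs_le.mp hΦ'
  have h₅ := abs_le.mp (hΦ t)
  rw [abs_sub_le_iff]
  constructor <;> linarith [hlow t, hup t]

section EmpiricalSpectralDistribution

variable {p : ℕ} {A B : Matrix (Fin p) (Fin p) ℝ}

lemma cdf'_esd (hA : A.IsHermitian) (t : ℝ) : cdf' (esd A hA) t = hA.eigenvalueCount t / p := by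
  have hdirac : ∀ i, Measure.dirac (hA.eigenvalues i) (Set.Iic t) =
      if hA.eigenvalues i ≤ t then 1 else 0 := fun i => by
    simp [Measure.dirac_apply' _ measurableSet_Iic, Set.indicator_apply]
  simp only [cdf', esd, Measure.smul_apply, Measure.finsetSum_apply, hdirac, sum_boole,
    Matrix.IsHermitian.eigenvalueCount]
  simp [ENNReal.smul_def, div_eq_mul_inv, mul_comm]

lemma cdf'_esd_le_one (hA : A.IsHermitian) (t : ℝ) : cdf' (esd A hA) t ≤ 1 := by
  rw [cdf'_esd]
  refine div_le_one_of_le₀ ?_ p.cast_nonneg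
  simpa [Matrix.IsHermitian.eigenvalueCount] using card_le_univ (α := Fin p) _

lemma cdf'_esd_le_cdf'_esd_add (hA : A.IsHermitian) (hB : B.IsHermitian) {d : ℝ}
    (hd : specNorm (A - B) ≤ d) (t : ℝ) : cdf' (esd A hA) t ≤ cdf' (esd B hB) (t + d) := by
  rw [cdf'_esd, cdf'_esd]
  gcongr
  exact hA.eigenvalueCount_le_eigenvalueCount_add hB hd t

theorem kolDist_esd_le (hA : A.IsHermitian) (hB : B.IsHermitian) (ν : Measure ℝ)
    [IsProbabilityMeasure ν] {H β : ℝ}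
    (hHol : ∀ s t : ℝ, |cdf' ν s - cdf' ν t| ≤ H * |s - t| ^ β) :
    kolDist (esd B hB) (esd A hA) ≤ 2 * kolDist (esd B hB) ν + H * specNorm (A - B) ^ β := by
  refine ciSup_le fun t => abs_sub_le_of_shift_le_of_le_shift (fun t => ?_)
    (cdf'_esd_le_cdf'_esd_add hA hB le_rfl)
    (abs_sub_cdf'_le_kolDist (cdf'_esd_le_one hB) (cdf'_le_one ν)) (fun t => ?_) t
  · simpa using cdf'_esd_le_cdf'_esd_add hB hA (specNorm_sub_comm A B).ge (t - specNorm (A - B))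
  · simpa [abs_of_nonneg (specNorm_nonneg (A - B))] using hHol (t + specNorm (A - B)) t

end EmpiricalSpectralDistribution

lemma one_le_mul_div_sq_add_one_div_sq_mul {y d A : ℝ} (hy : y ∈ Set.Ioo (0 : ℝ) 1)
    (hyd : y < d) (hA : 0 < A) : 1 ≤ A * d / y ^ 2 + 1 / (y ^ 2 * A) := by
  obtain ⟨hy0, hy1⟩ := hy
  have hy2 : y ^ 2 < y := by nlinarith
  rcases le_or_gt (y ^ 2) (A * d) with h | h
  · have : 1 ≤ A * d / y ^ 2 := (one_le_div (by positivity)).mpr h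
    have : 0 ≤ 1 / (y ^ 2 * A) := by positivity
    linarith
  · -- `A * d < y ^ 2 < d` forces `A < 1`.
    have hA1 : A < 1 := by nlinarith
    have : 1 ≤ 1 / (y ^ 2 * A) := (one_le_div (by positivity)).mpr (by nlinarith)
    have : 0 ≤ A * d / y ^ 2 := by have := hy0.trans hyd; positivity
    linarith

lemma le_mul_error_terms {D K H d y A β : ℝ} (hK : 0 ≤ K) (hH : 0 ≤ H) (hd : 0 ≤ d)
    (hy : y ∈ Set.Ioo (0 : ℝ) 1) (hA : 0 < A) (hβ : 0 ≤ β) (hD₁ : D ≤ 1)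
    (hD : D ≤ 2 * K + H * d ^ β) :
    D ≤ (2 + H) * (A * d / y ^ 2 + 1 / (y ^ 2 * A) + y ^ β + K) := by
  have hAd : 0 ≤ A * d / y ^ 2 := by positivity
  have hyA : 0 ≤ 1 / (y ^ 2 * A) := by have := hy.1; positivity
  have hyβ : 0 ≤ y ^ β := Real.rpow_nonneg hy.1.le β
  rcases le_or_gt d y with hdy | hdy
  · have : H * d ^ β ≤ H * y ^ β := by gcongr
    nlinarith
  · have := one_le_mul_div_sq_add_one_div_sq_mul hy hdy hA
    nlinarith

theorem stmt_17_general (p : ℕ → ℕ)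
    (Sig1 Sig2 : (n : ℕ) → Matrix (Fin (p n)) (Fin (p n)) ℝ)
    (hSig1 : ∀ n, (Sig1 n).IsHermitian) (hSig2 : ∀ n, (Sig2 n).IsHermitian)
    (ν : Measure ℝ) [IsProbabilityMeasure ν]
    (β : ℝ) (hβ : 0 < β)
    (Hconst : ℝ) (hH : 0 < Hconst)
    (hHol : ∀ s t : ℝ, |cdf' ν s - cdf' ν t| ≤ Hconst * |s - t| ^ β) :
    ∃ C > (0:ℝ), ∃ N : ℕ, ∀ n ≥ N, ∀ y : ℝ, y ∈ Set.Ioo (0:ℝ) 1 → ∀ A > (0:ℝ),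
      kolDist (esd (Sig2 n) (hSig2 n)) (esd (Sig1 n) (hSig1 n)) ≤
        C * (A * specNorm (Sig1 n - Sig2 n) / y ^ 2 + 1 / (y ^ 2 * A) + y ^ β +
          kolDist (esd (Sig2 n) (hSig2 n)) ν) := by
  refine ⟨2 + Hconst, by positivity, 0, fun n _ y hy A hA => ?_⟩
  exact le_mul_error_terms (kolDist_nonneg _ _) hH.le (specNorm_nonneg _) hy hA hβ.le
    (kolDist_le_one (cdf'_esd_le_one _) (cdf'_esd_le_one _))
    (kolDist_esd_le (hSig1 n) (hSig2 n) ν hHol)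

theorem stmt_17 (p : ℕ → ℕ) (hp : ∀ n, 0 < p n)
    (Sig1 Sig2 : (n : ℕ) → Matrix (Fin (p n)) (Fin (p n)) ℝ)
    (hSig1 : ∀ n, (Sig1 n).IsHermitian) (hSig2 : ∀ n, (Sig2 n).IsHermitian)
    (hb1 : ∃ K : ℝ, ∀ n, specNorm (Sig1 n) ≤ K) (hb2 : ∃ K : ℝ, ∀ n, specNorm (Sig2 n) ≤ K)
    (hdiff : Tendsto (fun n => specNorm (Sig1 n - Sig2 n)) atTop (nhds 0))
    (ν : Measure ℝ) [IsProbabilityMeasure ν]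
    (hweak : ∀ f : BoundedContinuousFunction ℝ ℝ,
      Tendsto (fun n => ∫ x, f x ∂(esd (Sig2 n) (hSig2 n))) atTop (nhds (∫ x, f x ∂ν)))
    (β : ℝ) (hβ : 0 < β) (hβ1 : β ≤ 1)
    (Hconst : ℝ) (hH : 0 < Hconst)
    (hHol : ∀ s t : ℝ, |cdf' ν s - cdf' ν t| ≤ Hconst * |s - t| ^ β) :
    ∃ C > (0:ℝ), ∃ N : ℕ, ∀ n ≥ N, ∀ y : ℝ, y ∈ Set.Ioo (0:ℝ) 1 → ∀ A > (0:ℝ),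
      kolDist (esd (Sig2 n) (hSig2 n)) (esd (Sig1 n) (hSig1 n)) ≤
        C * (A * specNorm (Sig1 n - Sig2 n) / y ^ 2 + 1 / (y ^ 2 * A) + y ^ β +
          kolDist (esd (Sig2 n) (hSig2 n)) ν) :=
  stmt_17_general p Sig1 Sig2 hSig1 hSig2 ν β hβ Hconst hH hHol
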